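/- Let M > 0 and λ ≥ 0, let u : ℝ × ℝ → ℝ be smooth on ℝ × (2M,∞), and define V(τ̄,ρ̄) = (1/ρ̄)·u(τ̄ + r_*(1/ρ̄), 1/ρ̄) for τ̄ ∈ ℝ and ρ̄ ∈ (0, 1/(2M)). Then u is a λ-mode solution (i.e., it satisfies the λ-mode Schwarzschild wave equation at every point of ℝ × (2M,∞)) if and only if V satisfies the conformally transformed equation 2·∂_τ̄∂_ρ̄ V + (1−2Mρ̄)·(ρ̄²·∂²_ρ̄ V + ρ̄·∂_ρ̄ V) + (1−4Mρ̄)·ρ̄·∂_ρ̄ V − λ²·V − 2M·ρ̄·V = 0 at every point of ℝ × (0, 1/(2M)). (The conformal transformation □_S u = 0 ⇔ (□̃_∞ + γ_∞)ũ = 0 with ũ = ρ̄^{−1}u and γ_∞ = −2Mρ̄, stated for a single spherical-harmonic mode.) -/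

import Mathlib

open MeasureTheory Filter Set Function
open scoped ContDiff

/-- The tortoise coordinate `r_* = r + 2M log(r - 2M)`. -/
noncomputable def rstar (M r : ℝ) : ℝ := r + 2*M*Real.log (r - 2*M)

/-- Partial derivative of `u` in the first (time) variable. -/
noncomputable def pdt (u : ℝ → ℝ → ℝ) (t r : ℝ) : ℝ := deriv (fun s => u s r) t

/-- Second partial derivative of `u` in the first (time) variable. -/
noncomputable def pdtt (u : ℝ → ℝ → ℝ) (t r : ℝ) : ℝ := deriv (fun s => pdt u s r) t

/-- Partial derivative of `u` in the second (radial) variable. -/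
noncomputable def pdr (u : ℝ → ℝ → ℝ) (t r : ℝ) : ℝ := deriv (fun s => u t s) r

/-- Second partial derivative of `u` in the second (radial) variable. -/
noncomputable def pdrr (u : ℝ → ℝ → ℝ) (t r : ℝ) : ℝ := deriv (fun s => pdr u t s) r

/-- `u(t,r)` is a λ-mode solution of the wave equation on the mass-`M`
Schwarzschild exterior: it is smooth on `ℝ × (2M,∞)` and satisfies
`−(r/(r−2M))·∂²ₜu + ((r−2M)/r)·∂²ᵣu + (2(r−M)/r²)·∂ᵣu − (λ²/r²)·u = 0` there. -/
def IsModeSolution (M lam : ℝ) (u : ℝ → ℝ → ℝ) : Prop :=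
  ContDiffOn ℝ ∞ (Function.uncurry u) ((Set.univ : Set ℝ) ×ˢ Set.Ioi (2*M)) ∧
  ∀ t r : ℝ, 2*M < r →
    -(r/(r-2*M)) * pdtt u t r + ((r-2*M)/r) * pdrr u t r
      + (2*(r-M)/r^2) * pdr u t r - lam^2/r^2 * u t r = 0

/-- The rescaled solution near null infinity in the outgoing Eddington–Finkelstein
coordinates `τ̄ = t − r_*(r)`, `ρ̄ = 1/r`: `V(τ̄,ρ̄) = (1/ρ̄)·u(τ̄ + r_*(1/ρ̄), 1/ρ̄)`. -/
noncomputable def nullV (M : ℝ) (u : ℝ → ℝ → ℝ) (τ ρ : ℝ) : ℝ :=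
  (1/ρ) * u (τ + rstar M (1/ρ)) (1/ρ)

/-- The λ-mode wave equation in outgoing coordinates near null infinity, at the point
`(τ̄,ρ̄)`:
`2·∂_τ̄∂_ρ̄ v + (1−2Mρ̄)·(ρ̄²·∂²_ρ̄ v + ρ̄·∂_ρ̄ v) + (1−4Mρ̄)·ρ̄·∂_ρ̄ v − λ²·v − 2Mρ̄·v = 0`. -/
def NullInftyEqAt (M lam : ℝ) (v : ℝ → ℝ → ℝ) (τ ρ : ℝ) : Prop :=
  2 * deriv (fun s => deriv (fun p => v s p) ρ) τ
    + (1 - 2*M*ρ) * (ρ^2 * deriv (fun p => deriv (fun q => v τ q) p) ρ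
        + ρ * deriv (fun p => v τ p) ρ)
    + (1 - 4*M*ρ) * ρ * deriv (fun p => v τ p) ρ
    - lam^2 * v τ ρ - 2*M*ρ * v τ ρ = 0

/-!
Along the coordinate change `(τ̄, ρ̄) ↦ (t, r) = (τ̄ + r_*(1/ρ̄), 1/ρ̄)` the chain rule gives
`∂_τ̄ = ∂_t` and `∂_ρ̄ = -r² (r/(r-2M) ∂_t + ∂_r)`, since `r_*' = r/(r-2M)`. Applying this twice to
`V = r · u(t, r)` and using the symmetry of the mixed partials of `u`, the conformally transformed
operator applied to `V` at `(τ̄, ρ̄)` equals `r³` times the mode operator applied to `u` at `(t, r)`.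
As the coordinate change is a bijection between the two domains, the equations are equivalent.
-/

open Topology

section FDeriv

variable {𝕜 E F : Type*} [NontriviallyNormedField 𝕜] [NormedAddCommGroup E] [NormedSpace 𝕜 E]
  [NormedAddCommGroup F] [NormedSpace 𝕜 F] {f : E → F} {x : E}

lemma fderiv_fderiv_apply_const (hf : DifferentiableAt 𝕜 (fderiv 𝕜 f) x) (v w : E) :
    fderiv 𝕜 (fun y => fderiv 𝕜 f y v) x w = fderiv 𝕜 (fderiv 𝕜 f) x w v := by
  rw [fderiv_clm_apply hf (differentiableAt_const v)]
  simp

end FDeriv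

section PartialDerivatives

variable {u : ℝ → ℝ → ℝ}

lemma pdt_eq_fderiv {t r : ℝ} (hu : DifferentiableAt ℝ (uncurry u) (t, r)) :
    pdt u t r = fderiv ℝ (uncurry u) (t, r) (1, 0) :=
  (hu.hasFDerivAt.comp_hasDerivAt (f := fun s => (s, r)) t
    ((hasDerivAt_id t).prodMk (hasDerivAt_const t r))).deriv

lemma pdr_eq_fderiv {t r : ℝ} (hu : DifferentiableAt ℝ (uncurry u) (t, r)) :
    pdr u t r = fderiv ℝ (uncurry u) (t, r) (0, 1) :=
  (hu.hasFDerivAt.comp_hasDerivAt (f := fun s => (t, s)) r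
    ((hasDerivAt_const r t).prodMk (hasDerivAt_id r))).deriv

lemma hasDerivAt_comp_of_differentiableAt {x y : ℝ → ℝ} {x' y' p : ℝ}
    (hu : DifferentiableAt ℝ (uncurry u) (x p, y p)) (hx : HasDerivAt x x' p)
    (hy : HasDerivAt y y' p) :
    HasDerivAt (fun q => u (x q) (y q))
      (x' * pdt u (x p) (y p) + y' * pdr u (x p) (y p)) p := by
  have h := hu.hasFDerivAt.comp_hasDerivAt p (hx.prodMk hy)
  have hsplit : ((x', y') : ℝ × ℝ) = x' • ((1 : ℝ), (0 : ℝ)) + y' • ((0 : ℝ), (1 : ℝ)) := by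
    simp
  rwa [hsplit, map_add, map_smul, map_smul, smul_eq_mul, smul_eq_mul, ← pdt_eq_fderiv hu,
    ← pdr_eq_fderiv hu] at h

variable {U : Set (ℝ × ℝ)}

lemma eqOn_uncurry_pdt (hu : DifferentiableOn ℝ (uncurry u) U) (hU : IsOpen U) :
    EqOn (uncurry (pdt u)) (fun x => fderiv ℝ (uncurry u) x (1, 0)) U :=
  fun x hx => pdt_eq_fderiv ((hu x hx).differentiableAt (hU.mem_nhds hx))

lemma eqOn_uncurry_pdr (hu : DifferentiableOn ℝ (uncurry u) U) (hU : IsOpen U) :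
    EqOn (uncurry (pdr u)) (fun x => fderiv ℝ (uncurry u) x (0, 1)) U :=
  fun x hx => pdr_eq_fderiv ((hu x hx).differentiableAt (hU.mem_nhds hx))

variable {m n : WithTop ℕ∞}

lemma ContDiffOn.uncurry_pdt (hu : ContDiffOn ℝ n (uncurry u) U) (hU : IsOpen U)
    (hmn : m + 1 ≤ n) : ContDiffOn ℝ m (uncurry (pdt u)) U :=
  ((hu.fderiv_of_isOpen hU hmn).clm_apply contDiffOn_const).congr
    (eqOn_uncurry_pdt (hu.differentiableOn (by rintro rfl; simp at hmn)) hU)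

lemma ContDiffOn.uncurry_pdr (hu : ContDiffOn ℝ n (uncurry u) U) (hU : IsOpen U)
    (hmn : m + 1 ≤ n) : ContDiffOn ℝ m (uncurry (pdr u)) U :=
  ((hu.fderiv_of_isOpen hU hmn).clm_apply contDiffOn_const).congr
    (eqOn_uncurry_pdr (hu.differentiableOn (by rintro rfl; simp at hmn)) hU)

lemma pdr_pdt_eq_pdt_pdr (hu : ContDiffOn ℝ 2 (uncurry u) U) (hU : IsOpen U) {t r : ℝ}
    (hx : (t, r) ∈ U) : pdr (pdt u) t r = pdt (pdr u) t r := by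
  have hx' : U ∈ 𝓝 (t, r) := hU.mem_nhds hx
  have hC2 : ContDiffAt ℝ 2 (uncurry u) (t, r) := hu.contDiffAt hx'
  have hC2' : DifferentiableAt ℝ (fderiv ℝ (uncurry u)) (t, r) :=
    (hC2.fderiv_right (m := 1) le_rfl).differentiableAt one_ne_zero
  have hdiff (g : ℝ → ℝ → ℝ) (hg : ContDiffOn ℝ 1 (uncurry g) U) :
      DifferentiableAt ℝ (uncurry g) (t, r) :=
    (hg.contDiffAt hx').differentiableAt one_ne_zero
  rw [pdr_eq_fderiv (hdiff _ (hu.uncurry_pdt hU le_rfl)),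
    pdt_eq_fderiv (hdiff _ (hu.uncurry_pdr hU le_rfl)),
    ((eqOn_uncurry_pdt (hu.differentiableOn (by norm_num)) hU).eventuallyEq_of_mem hx').fderiv_eq,
    ((eqOn_uncurry_pdr (hu.differentiableOn (by norm_num)) hU).eventuallyEq_of_mem hx').fderiv_eq,
    fderiv_fderiv_apply_const hC2', fderiv_fderiv_apply_const hC2']
  exact hC2.isSymmSndFDerivAt (by simp) _ _

end PartialDerivatives

section NullCoordinates

variable {M : ℝ}

lemma hasDerivAt_one_div {x : ℝ} (hx : x ≠ 0) : HasDerivAt (fun y : ℝ => 1 / y) (-(1 / x) ^ 2) x := by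
  simpa using hasDerivAt_inv hx

lemma hasDerivAt_rstar {r : ℝ} (hr : r ≠ 2 * M) : HasDerivAt (rstar M) (r / (r - 2 * M)) r := by
  have hr' : r - 2 * M ≠ 0 := sub_ne_zero.mpr hr
  have h := (hasDerivAt_id r).add
    ((((hasDerivAt_id r).sub_const (2 * M)).log hr').const_mul (2 * M))
  rwa [show 1 + 2 * M * (1 / (id r - 2 * M)) = r / (r - 2 * M) by
    simp only [id]; field_simp; ring] at h

lemma two_mul_lt_one_div {ρ : ℝ} (hρ : ρ ∈ Ioo 0 (1 / (2 * M))) : 2 * M < 1 / ρ := by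
  have hM : 0 < 2 * M := one_div_pos.mp (hρ.1.trans hρ.2)
  rw [lt_one_div hM hρ.1]
  exact hρ.2

lemma one_div_mem_Ioo (hM : 0 < M) {r : ℝ} (hr : 2 * M < r) : 1 / r ∈ Ioo 0 (1 / (2 * M)) :=
  ⟨one_div_pos.mpr (by linarith), one_div_lt_one_div_of_lt (by linarith) hr⟩

/-- `g` in the coordinates `(τ̄, ρ̄) = (t - r_*(r), 1/r)`. -/
noncomputable def nullPullback (M : ℝ) (g : ℝ → ℝ → ℝ) (τ ρ : ℝ) : ℝ :=
  g (τ + rstar M (1 / ρ)) (1 / ρ)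

variable {g : ℝ → ℝ → ℝ} {τ ρ : ℝ}

lemma hasDerivAt_nullPullback_tau
    (hg : DifferentiableAt ℝ (uncurry g) (τ + rstar M (1 / ρ), 1 / ρ)) :
    HasDerivAt (fun s => nullPullback M g s ρ) (nullPullback M (pdt g) τ ρ) τ := by
  simpa [nullPullback] using hasDerivAt_comp_of_differentiableAt hg
    ((hasDerivAt_id τ).add_const _) (hasDerivAt_const τ (1 / ρ))

lemma hasDerivAt_nullPullback_rho (hρ : ρ ∈ Ioo 0 (1 / (2 * M)))
    (hg : DifferentiableAt ℝ (uncurry g) (τ + rstar M (1 / ρ), 1 / ρ)) :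
    HasDerivAt (nullPullback M g τ)
      (-(1 / ρ) ^ 2 * ((1 / ρ) / (1 / ρ - 2 * M) * nullPullback M (pdt g) τ ρ
        + nullPullback M (pdr g) τ ρ)) ρ := by
  have hinv := hasDerivAt_one_div hρ.1.ne'
  have hrstar := (hasDerivAt_rstar (two_mul_lt_one_div hρ).ne').comp ρ hinv
  refine (hasDerivAt_comp_of_differentiableAt hg (hrstar.const_add τ) hinv).congr_deriv ?_
  simp only [nullPullback, Function.comp_apply]
  ring

end NullCoordinates

section NullV

variable {M : ℝ} {u : ℝ → ℝ → ℝ} {τ ρ : ℝ}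

lemma differentiableAt_of_mem_Ioo {n : WithTop ℕ∞} {g : ℝ → ℝ → ℝ}
    (hg : ContDiffOn ℝ n (uncurry g) ((univ : Set ℝ) ×ˢ Ioi (2 * M))) (hn : n ≠ 0)
    (hρ : ρ ∈ Ioo 0 (1 / (2 * M))) :
    DifferentiableAt ℝ (uncurry g) (τ + rstar M (1 / ρ), 1 / ρ) :=
  (hg.contDiffAt ((isOpen_univ.prod isOpen_Ioi).mem_nhds
    (show (τ + rstar M (1 / ρ), 1 / ρ) ∈ (univ : Set ℝ) ×ˢ Ioi (2 * M) from
      ⟨mem_univ _, two_mul_lt_one_div hρ⟩))).differentiableAt hn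

/-- `∂_ρ̄ V`, with `V = nullV M u`. -/
noncomputable def nullVRho (M : ℝ) (u : ℝ → ℝ → ℝ) (τ ρ : ℝ) : ℝ :=
  -(1 / ρ) ^ 2 * nullPullback M u τ ρ
    - (1 / ρ) ^ 3 * ((1 / ρ) / (1 / ρ - 2 * M) * nullPullback M (pdt u) τ ρ
      + nullPullback M (pdr u) τ ρ)

lemma hasDerivAt_nullV (hρ : ρ ∈ Ioo 0 (1 / (2 * M)))
    (hu : DifferentiableAt ℝ (uncurry u) (τ + rstar M (1 / ρ), 1 / ρ)) :
    HasDerivAt (nullV M u τ) (nullVRho M u τ ρ) ρ := by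
  refine ((hasDerivAt_one_div hρ.1.ne').mul (hasDerivAt_nullPullback_rho hρ hu)).congr_deriv ?_
  simp only [nullVRho]
  ring

lemma hasDerivAt_nullVRho_tau (hu : ContDiffOn ℝ 2 (uncurry u) ((univ : Set ℝ) ×ˢ Ioi (2 * M)))
    (hρ : ρ ∈ Ioo 0 (1 / (2 * M))) :
    HasDerivAt (fun s => nullVRho M u s ρ)
      (-(1 / ρ) ^ 2 * nullPullback M (pdt u) τ ρ
        - (1 / ρ) ^ 3 * ((1 / ρ) / (1 / ρ - 2 * M) * nullPullback M (pdtt u) τ ρ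
          + nullPullback M (pdt (pdr u)) τ ρ)) τ := by
  have hopen : IsOpen ((univ : Set ℝ) ×ˢ Ioi (2 * M)) := isOpen_univ.prod isOpen_Ioi
  have hP := hasDerivAt_nullPullback_tau (differentiableAt_of_mem_Ioo (τ := τ) hu two_ne_zero hρ)
  have hPt := hasDerivAt_nullPullback_tau
    (differentiableAt_of_mem_Ioo (τ := τ) (hu.uncurry_pdt hopen le_rfl) one_ne_zero hρ)
  have hPr := hasDerivAt_nullPullback_tau
    (differentiableAt_of_mem_Ioo (τ := τ) (hu.uncurry_pdr hopen le_rfl) one_ne_zero hρ)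
  exact (hP.const_mul _).sub (((hPt.const_mul _).add hPr).const_mul _)

lemma hasDerivAt_nullVRho_rho (hu : ContDiffOn ℝ 2 (uncurry u) ((univ : Set ℝ) ×ˢ Ioi (2 * M)))
    (hρ : ρ ∈ Ioo 0 (1 / (2 * M))) :
    HasDerivAt (nullVRho M u τ)
      (2 * (1 / ρ) ^ 3 * nullPullback M u τ ρ
        + 4 * (1 / ρ) ^ 4 * ((1 / ρ) / (1 / ρ - 2 * M) * nullPullback M (pdt u) τ ρ
          + nullPullback M (pdr u) τ ρ)
        - 2 * M * (1 / ρ) ^ 5 / (1 / ρ - 2 * M) ^ 2 * nullPullback M (pdt u) τ ρ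
        + (1 / ρ) ^ 5 * (((1 / ρ) / (1 / ρ - 2 * M)) ^ 2 * nullPullback M (pdtt u) τ ρ
          + 2 * ((1 / ρ) / (1 / ρ - 2 * M)) * nullPullback M (pdt (pdr u)) τ ρ
          + nullPullback M (pdrr u) τ ρ)) ρ := by
  have hopen : IsOpen ((univ : Set ℝ) ×ˢ Ioi (2 * M)) := isOpen_univ.prod isOpen_Ioi
  have hr : 2 * M < 1 / ρ := two_mul_lt_one_div hρ
  have hrM : 1 / ρ - 2 * M ≠ 0 := sub_ne_zero.mpr hr.ne'
  have hsymm : nullPullback M (pdr (pdt u)) τ ρ = nullPullback M (pdt (pdr u)) τ ρ :=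
    pdr_pdt_eq_pdt_pdr hu hopen ⟨mem_univ _, hr⟩
  have hinv := hasDerivAt_one_div hρ.1.ne'
  have hk := hinv.div (hinv.sub_const (2 * M)) hrM
  have hP := hasDerivAt_nullPullback_rho hρ (differentiableAt_of_mem_Ioo (τ := τ) hu two_ne_zero hρ)
  have hPt := hasDerivAt_nullPullback_rho hρ
    (differentiableAt_of_mem_Ioo (τ := τ) (hu.uncurry_pdt hopen le_rfl) one_ne_zero hρ)
  have hPr := hasDerivAt_nullPullback_rho hρ
    (differentiableAt_of_mem_Ioo (τ := τ) (hu.uncurry_pdr hopen le_rfl) one_ne_zero hρ)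
  refine (((hinv.pow 2).neg.mul hP).sub ((hinv.pow 3).mul ((hk.mul hPt).add hPr))).congr_deriv ?_
  simp only [Pi.div_apply, Pi.mul_apply, Pi.add_apply, Pi.pow_apply, Pi.neg_apply, hsymm]
  rw [show pdtt u = pdt (pdt u) from rfl, show pdrr u = pdr (pdr u) from rfl]
  generalize 1 / ρ = r at hrM ⊢
  field_simp
  ring

end NullV

noncomputable def modeOperator (M lam : ℝ) (u : ℝ → ℝ → ℝ) (t r : ℝ) : ℝ :=
  -(r / (r - 2 * M)) * pdtt u t r + ((r - 2 * M) / r) * pdrr u t r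
    + (2 * (r - M) / r ^ 2) * pdr u t r - lam ^ 2 / r ^ 2 * u t r

lemma nullInftyEqAt_iff_modeOperator_eq_zero {M lam : ℝ} {u : ℝ → ℝ → ℝ} {τ ρ : ℝ}
    (hu : ContDiffOn ℝ 2 (uncurry u) ((univ : Set ℝ) ×ˢ Ioi (2 * M)))
    (hρ : ρ ∈ Ioo 0 (1 / (2 * M))) :
    NullInftyEqAt M lam (nullV M u) τ ρ ↔
      modeOperator M lam u (τ + rstar M (1 / ρ)) (1 / ρ) = 0 := by
  have hV : ∀ s, ∀ p ∈ Ioo 0 (1 / (2 * M)), deriv (nullV M u s) p = nullVRho M u s p :=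
    fun s p hp => (hasDerivAt_nullV hp (differentiableAt_of_mem_Ioo hu two_ne_zero hp)).deriv
  have hVρρ : deriv (fun p => deriv (nullV M u τ) p) ρ = deriv (nullVRho M u τ) ρ :=
    Filter.EventuallyEq.deriv_eq (eventually_of_mem (Ioo_mem_nhds hρ.1 hρ.2) (hV τ))
  have hVτρ : deriv (fun s => deriv (nullV M u s) ρ) τ = deriv (fun s => nullVRho M u s ρ) τ := by
    simp only [hV _ _ hρ]
  have hr : 2 * M < 1 / ρ := two_mul_lt_one_div hρ
  have hrM : 1 / ρ - 2 * M ≠ 0 := sub_ne_zero.mpr hr.ne'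
  have hρ0 : 1 / ρ ≠ 0 := (one_div_pos.mpr hρ.1).ne'
  unfold NullInftyEqAt
  rw [hVτρ, hVρρ, hV τ ρ hρ, (hasDerivAt_nullVRho_tau hu hρ).deriv,
    (hasDerivAt_nullVRho_rho hu hρ).deriv]
  refine Iff.trans ?_ (mul_eq_zero_iff_left (pow_ne_zero 3 hρ0))
  convert Iff.rfl using 2
  simp only [nullVRho, nullV, modeOperator, nullPullback]
  have hρ' : ρ = 1 / (1 / ρ) := by field_simp
  generalize 1 / ρ = r at hρ' hrM hρ0 ⊢
  subst hρ'
  field_simp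
  ring

theorem mode_equation_conformal_equivalence_general
    (M lam : ℝ) (hM : 0 < M)
    (u : ℝ → ℝ → ℝ)
    (hu : ContDiffOn ℝ ∞ (Function.uncurry u) ((Set.univ : Set ℝ) ×ˢ Set.Ioi (2*M))) :
    (∀ t r : ℝ, 2*M < r →
      -(r/(r-2*M)) * pdtt u t r + ((r-2*M)/r) * pdrr u t r
        + (2*(r-M)/r^2) * pdr u t r - lam^2/r^2 * u t r = 0) ↔
    (∀ τ ρ : ℝ, ρ ∈ Set.Ioo 0 (1/(2*M)) → NullInftyEqAt M lam (nullV M u) τ ρ) := by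
  have hu2 : ContDiffOn ℝ 2 (uncurry u) ((univ : Set ℝ) ×ˢ Ioi (2 * M)) :=
    hu.of_le (by norm_cast)
  constructor
  · intro h τ ρ hρ
    exact (nullInftyEqAt_iff_modeOperator_eq_zero hu2 hρ).mpr (h _ _ (two_mul_lt_one_div hρ))
  · intro h t r hr
    have hmode := (nullInftyEqAt_iff_modeOperator_eq_zero hu2 (one_div_mem_Ioo hM hr)).mp
      (h (t - rstar M r) (1 / r) (one_div_mem_Ioo hM hr))
    rwa [one_div_one_div, sub_add_cancel] at hmode

/-- The conformal transformation of the λ-mode wave equation: a smooth `u` on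
`ℝ × (2M,∞)` satisfies the λ-mode Schwarzschild wave equation iff the rescaled function
`V = ρ̄^{-1}·u` in outgoing coordinates satisfies the conformally transformed equation
on `ℝ × (0, 1/(2M))`. -/
theorem mode_equation_conformal_equivalence
    (M lam : ℝ) (hM : 0 < M) (hlam : 0 ≤ lam)
    (u : ℝ → ℝ → ℝ)
    (hu : ContDiffOn ℝ ∞ (Function.uncurry u) ((Set.univ : Set ℝ) ×ˢ Set.Ioi (2*M))) :
    (∀ t r : ℝ, 2*M < r →
      -(r/(r-2*M)) * pdtt u t r + ((r-2*M)/r) * pdrr u t r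
        + (2*(r-M)/r^2) * pdr u t r - lam^2/r^2 * u t r = 0) ↔
    (∀ τ ρ : ℝ, ρ ∈ Set.Ioo 0 (1/(2*M)) → NullInftyEqAt M lam (nullV M u) τ ρ) :=
  mode_equation_conformal_equivalence_general M lam hM u hu
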